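/- Fix q>0 and R(θ,a) = (q/a²) H(a²|θ|/q). Then for a>0, θ≠0, the mixed partial derivative satisfies ∂_θ ∂_a R(θ,a) = (1/a)·sign(θ)· (a²|θ|/q) / H(a²|θ|/q)². -/

import Mathlib

noncomputable def G (s : ℝ) : ℝ :=
  Real.sqrt (s * (s - 1)) + Real.log (Real.sqrt s + Real.sqrt (s - 1))

lemma G_hasDerivAt {s : ℝ} (hs : 1 < s) :
    HasDerivAt G (s / Real.sqrt (s * (s - 1))) s := by
  have hs0 : (0:ℝ) < s := by linarith
  have hs1 : (0:ℝ) < s - 1 := by linarith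
  have hss : 0 < s * (s - 1) := mul_pos hs0 hs1
  have hsq : 0 < Real.sqrt (s * (s - 1)) := Real.sqrt_pos.2 hss
  have hsqs : 0 < Real.sqrt s := Real.sqrt_pos.2 hs0
  have hsqs1 : 0 < Real.sqrt (s - 1) := Real.sqrt_pos.2 hs1
  have h1 : HasDerivAt (fun t : ℝ => t * (t - 1)) (2 * s - 1) s := by
    have := (hasDerivAt_id s).mul ((hasDerivAt_id s).sub_const 1)
    exact this.congr_deriv (by simp [id]; ring)
  have h2 : HasDerivAt (fun t : ℝ => Real.sqrt (t * (t - 1)))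
      (1 / (2 * Real.sqrt (s * (s - 1))) * (2 * s - 1)) s :=
    (Real.hasDerivAt_sqrt (ne_of_gt hss)).comp s h1
  have h3 : HasDerivAt (fun t : ℝ => Real.sqrt t + Real.sqrt (t - 1))
      (1 / (2 * Real.sqrt s) + 1 / (2 * Real.sqrt (s - 1))) s := by
    have ha := Real.hasDerivAt_sqrt (ne_of_gt hs0)
    have hb : HasDerivAt (fun t : ℝ => Real.sqrt (t - 1)) (1 / (2 * Real.sqrt (s - 1))) s := by
      have := (Real.hasDerivAt_sqrt (ne_of_gt hs1)).comp s ((hasDerivAt_id s).sub_const 1)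
      simpa [Function.comp_def] using this
    exact ha.add hb
  have hpos : 0 < Real.sqrt s + Real.sqrt (s - 1) := by positivity
  have h4 : HasDerivAt (fun t : ℝ => Real.log (Real.sqrt t + Real.sqrt (t - 1)))
      ((Real.sqrt s + Real.sqrt (s - 1))⁻¹ *
        (1 / (2 * Real.sqrt s) + 1 / (2 * Real.sqrt (s - 1)))) s :=
    by have := (Real.hasDerivAt_log (ne_of_gt hpos)).comp s h3; exact this
  have h5 := h2.add h4
  have hmul : Real.sqrt (s * (s - 1)) = Real.sqrt s * Real.sqrt (s - 1) :=
    Real.sqrt_mul (le_of_lt hs0) _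
  have key : 1 / (2 * Real.sqrt (s * (s - 1))) * (2 * s - 1) +
      (Real.sqrt s + Real.sqrt (s - 1))⁻¹ *
        (1 / (2 * Real.sqrt s) + 1 / (2 * Real.sqrt (s - 1)))
      = s / Real.sqrt (s * (s - 1)) := by
    rw [hmul]
    have e1 : Real.sqrt s * Real.sqrt s = s := Real.mul_self_sqrt (le_of_lt hs0)
    have e2 : Real.sqrt (s - 1) * Real.sqrt (s - 1) = s - 1 :=
      Real.mul_self_sqrt (le_of_lt hs1)
    field_simp
    nlinarith [e1, e2, hsqs, hsqs1]
  rw [← key]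
  exact h5

lemma G_continuousOn : ContinuousOn G (Set.Ici 1) := by
  intro s hs
  simp only [Set.mem_Ici] at hs
  apply ContinuousWithinAt.add
  · exact ((Real.continuous_sqrt.comp (continuous_id.mul (continuous_sub_right 1))).continuousAt).continuousWithinAt
  · apply ContinuousAt.continuousWithinAt
    have hsq : (0:ℝ) < Real.sqrt s := Real.sqrt_pos.2 (by linarith)
    have hpos : (0:ℝ) < Real.sqrt s + Real.sqrt (s - 1) := by positivity
    have hcont : ContinuousAt (fun x : ℝ => Real.sqrt x + Real.sqrt (x - 1)) s :=
      (Real.continuous_sqrt.continuousAt).add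
        ((Real.continuous_sqrt.comp (continuous_sub_right 1)).continuousAt)
    have : ContinuousAt (Real.log ∘ fun x : ℝ => Real.sqrt x + Real.sqrt (x - 1)) s :=
      ContinuousAt.comp (Real.continuousAt_log (ne_of_gt hpos)) hcont
    exact this

lemma G_strictMonoOn : StrictMonoOn G (Set.Ici 1) := by
  apply strictMonoOn_of_deriv_pos (convex_Ici 1) G_continuousOn
  intro s hs
  rw [interior_Ici] at hs
  have hs1 : 1 < s := hs
  rw [(G_hasDerivAt hs1).deriv]
  have : 0 < Real.sqrt (s * (s - 1)) := Real.sqrt_pos.2 (by nlinarith)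
  positivity

lemma G_one : G 1 = 0 := by
  simp [G]

section H
variable (H : ℝ → ℝ)
    (hH1 : ∀ x : ℝ, 0 ≤ x → 1 ≤ H x ∧ G (H x) = x)
    (hH2 : ∀ s : ℝ, 1 ≤ s → H (G s) = s)

include hH1 in
lemma H_gt_one {x : ℝ} (hx : 0 < x) : 1 < H x := by
  rcases hH1 x (le_of_lt hx) with ⟨h1, h2⟩
  rcases lt_or_eq_of_le h1 with h | h
  · exact h
  · exfalso; rw [← h, G_one] at h2; linarith

include hH1 in
lemma H_strictMonoOn : StrictMonoOn H (Set.Ici 0) := by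
  intro x hx y hy hxy
  rcases hH1 x hx with ⟨hx1, hx2⟩
  rcases hH1 y hy with ⟨hy1, hy2⟩
  by_contra h
  push_neg at h
  rcases lt_or_eq_of_le h with h' | h'
  · have := G_strictMonoOn hy1 hx1 h'
    rw [hx2, hy2] at this; linarith
  · rw [← hx2, ← hy2, h'] at hxy; exact lt_irrefl _ hxy

include hH1 hH2 in
lemma H_continuousAt {x : ℝ} (hx : 0 < x) : ContinuousAt H x := by
  apply StrictMonoOn.continuousAt_of_image_mem_nhds
    ((H_strictMonoOn H hH1).mono (Set.Ioi_subset_Ici le_rfl))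
    (Ioi_mem_nhds hx)
  have hsub : Set.Ioi (1:ℝ) ⊆ H '' Set.Ioi 0 := by
    intro s hs
    have hs1 : (1:ℝ) < s := hs
    have hG : 0 < G s := by
      rw [← G_one]
      exact G_strictMonoOn (le_refl (1:ℝ)) (le_of_lt hs1) hs1
    exact ⟨G s, hG, hH2 s (le_of_lt hs1)⟩
  exact Filter.mem_of_superset (Ioi_mem_nhds (H_gt_one H hH1 hx)) hsub

include hH1 hH2 in
lemma H_hasDerivAt {x : ℝ} (hx : 0 < x) :
    HasDerivAt H (Real.sqrt (H x * (H x - 1)) / H x) x := by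
  have hHx := H_gt_one H hH1 hx
  have hd := G_hasDerivAt hHx
  have hne : H x / Real.sqrt (H x * (H x - 1)) ≠ 0 := by
    have h1 : 0 < Real.sqrt (H x * (H x - 1)) := Real.sqrt_pos.2 (by nlinarith)
    positivity
  have hev : ∀ᶠ y in nhds x, G (H y) = y := by
    filter_upwards [Ioi_mem_nhds hx] with y hy
    exact (hH1 y (le_of_lt hy)).2
  have := HasDerivAt.of_local_left_inverse (H_continuousAt H hH1 hH2 hx) hd hne hev
  have heq : (H x / Real.sqrt (H x * (H x - 1)))⁻¹ = Real.sqrt (H x * (H x - 1)) / H x := by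
    rw [inv_div]
  rwa [heq] at this

end H
noncomputable def Fa (s : ℝ) : ℝ := Real.sqrt (s * (s - 1)) / s

lemma Fa_hasDerivAt {s : ℝ} (hs : 1 < s) :
    HasDerivAt Fa (1 / (2 * s * Real.sqrt (s * (s - 1)))) s := by
  have hs0 : (0:ℝ) < s := by linarith
  have hss : 0 < s * (s - 1) := by nlinarith
  have hsq : 0 < Real.sqrt (s * (s - 1)) := Real.sqrt_pos.2 hss
  have h1 : HasDerivAt (fun t : ℝ => t * (t - 1)) (2 * s - 1) s := by
    have := (hasDerivAt_id s).mul ((hasDerivAt_id s).sub_const 1)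
    exact this.congr_deriv (by simp [id]; ring)
  have h2 : HasDerivAt (fun t : ℝ => Real.sqrt (t * (t - 1)))
      (1 / (2 * Real.sqrt (s * (s - 1))) * (2 * s - 1)) s :=
    (Real.hasDerivAt_sqrt (ne_of_gt hss)).comp s h1
  have h3 := h2.div (hasDerivAt_id s) (ne_of_gt hs0)
  have e : Real.sqrt (s * (s - 1)) * Real.sqrt (s * (s - 1)) = s * (s - 1) :=
    Real.mul_self_sqrt (le_of_lt hss)
  have key : (1 / (2 * Real.sqrt (s * (s - 1))) * (2 * s - 1) * id s -
      Real.sqrt (s * (s - 1)) * 1) / (id s) ^ 2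
      = 1 / (2 * s * Real.sqrt (s * (s - 1))) := by
    simp only [id]
    set w := Real.sqrt (s * (s - 1)) with hw
    rw [div_eq_div_iff (by positivity) (by positivity)]
    field_simp
    linear_combination (-2) * e
  rw [← key]
  exact h3

theorem stmt14 (H : ℝ → ℝ)
    (hH1 : ∀ x : ℝ, 0 ≤ x → 1 ≤ H x ∧ G (H x) = x)
    (hH2 : ∀ s : ℝ, 1 ≤ s → H (G s) = s)
    (q : ℝ) (hq : 0 < q)
    (R : ℝ → ℝ → ℝ)
    (hR : ∀ θ a : ℝ, R θ a = (q / a ^ 2) * H (a ^ 2 * |θ| / q)) :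
    ∀ a : ℝ, 0 < a → ∀ θ : ℝ, θ ≠ 0 →
      deriv (fun ϑ => deriv (fun α => R ϑ α) a) θ =
        (1 / a) * Real.sign θ * (a ^ 2 * |θ| / q) / (H (a ^ 2 * |θ| / q)) ^ 2 := by
  intro a ha θ hθ
  have inner : ∀ ϑ : ℝ, ϑ ≠ 0 →
      HasDerivAt (fun α => R ϑ α)
        (-2 * q / a ^ 3 * H (a ^ 2 * |ϑ| / q) + 2 * |ϑ| / a * Fa (H (a ^ 2 * |ϑ| / q))) a := by
    intro ϑ hϑ
    have habs : 0 < |ϑ| := abs_pos.2 hϑ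
    have hu : 0 < a ^ 2 * |ϑ| / q := by positivity
    have hHd := H_hasDerivAt H hH1 hH2 hu
    have hHu1 : 1 < H (a ^ 2 * |ϑ| / q) := H_gt_one H hH1 hu
    have hpow : HasDerivAt (fun α : ℝ => α ^ 2) (2 * a) a := by
      simpa using hasDerivAt_pow 2 a
    have hv : HasDerivAt (fun α : ℝ => α ^ 2 * |ϑ| / q) (2 * a * |ϑ| / q) a :=
      (hpow.mul_const |ϑ|).div_const q
    have hcomp : HasDerivAt (fun α : ℝ => H (α ^ 2 * |ϑ| / q))
        (Real.sqrt (H (a ^ 2 * |ϑ| / q) * (H (a ^ 2 * |ϑ| / q) - 1)) / H (a ^ 2 * |ϑ| / q) *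
          (2 * a * |ϑ| / q)) a := hHd.comp a hv
    have hq2 : HasDerivAt (fun α : ℝ => q / α ^ 2) (-2 * q / a ^ 3) a := by
      have := (hpow.inv (by positivity)).const_mul q
      have hval : q * (-(2 * a) / (a ^ 2) ^ 2) = -2 * q / a ^ 3 := by
        field_simp
        try ring
      rw [hval] at this
      exact this
    have hmain := hq2.mul hcomp
    have hfun : (fun α => R ϑ α) = fun α : ℝ => (q / α ^ 2) * H (α ^ 2 * |ϑ| / q) := by
      funext α; exact hR ϑ α
    rw [hfun]
    refine hmain.congr_deriv ?_
    have hHne : H (a ^ 2 * |ϑ| / q) ≠ 0 := by linarith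
    simp only [Fa]
    field_simp
  have hEeq : (fun ϑ => deriv (fun α => R ϑ α) a) =ᶠ[nhds θ]
      (fun ϑ => -2 * q / a ^ 3 * H (a ^ 2 * |ϑ| / q) + 2 * |ϑ| / a * Fa (H (a ^ 2 * |ϑ| / q))) := by
    filter_upwards [compl_singleton_mem_nhds hθ] with ϑ hϑ
    exact (inner ϑ (by simpa using hϑ)).deriv
  rw [hEeq.deriv_eq]
  -- now differentiate the explicit expression at θ
  set sg : ℝ := (SignType.sign θ : ℝ) with hsgdef
  have hsg : Real.sign θ = sg := by
    rcases lt_or_gt_of_ne hθ with h | h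
    · rw [Real.sign_of_neg h, hsgdef, sign_neg h]; simp
    · rw [Real.sign_of_pos h, hsgdef, sign_pos h]; simp
  have habs : 0 < |θ| := abs_pos.2 hθ
  have hu : 0 < a ^ 2 * |θ| / q := by positivity
  have hHu1 : 1 < H (a ^ 2 * |θ| / q) := H_gt_one H hH1 hu
  set s := H (a ^ 2 * |θ| / q) with hsdef
  have hs0 : (0:ℝ) < s := by linarith
  have hss : 0 < s * (s - 1) := by nlinarith
  have hw : 0 < Real.sqrt (s * (s - 1)) := Real.sqrt_pos.2 hss
  have habsd : HasDerivAt (fun ϑ : ℝ => |ϑ|) sg θ := hasDerivAt_abs hθ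
  have hv : HasDerivAt (fun ϑ : ℝ => a ^ 2 * |ϑ| / q) (a ^ 2 * sg / q) θ :=
    (habsd.const_mul (a ^ 2)).div_const q
  have hHθ : HasDerivAt (fun ϑ : ℝ => H (a ^ 2 * |ϑ| / q))
      (Real.sqrt (s * (s - 1)) / s * (a ^ 2 * sg / q)) θ :=
    (H_hasDerivAt H hH1 hH2 hu).comp θ hv
  have hFaθ : HasDerivAt (fun ϑ : ℝ => Fa (H (a ^ 2 * |ϑ| / q)))
      (1 / (2 * s * Real.sqrt (s * (s - 1))) *
        (Real.sqrt (s * (s - 1)) / s * (a ^ 2 * sg / q))) θ :=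
    by have := (Fa_hasDerivAt hHu1).comp θ hHθ; exact this
  have hT1 : HasDerivAt (fun ϑ : ℝ => -2 * q / a ^ 3 * H (a ^ 2 * |ϑ| / q))
      (-2 * q / a ^ 3 * (Real.sqrt (s * (s - 1)) / s * (a ^ 2 * sg / q))) θ :=
    hHθ.const_mul _
  have habs2 : HasDerivAt (fun ϑ : ℝ => 2 * |ϑ| / a) (2 * sg / a) θ :=
    (habsd.const_mul 2).div_const a
  have hT2 := habs2.mul hFaθ
  have hE := hT1.add hT2
  rw [(show HasDerivAt (fun ϑ : ℝ => -2 * q / a ^ 3 * H (a ^ 2 * |ϑ| / q) + 2 * |ϑ| / a * Fa (H (a ^ 2 * |ϑ| / q))) _ θ from hE).deriv, hsg]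
  simp only [Fa, ← hsdef]
  have hsne := hs0.ne'
  set w := Real.sqrt (s * (s - 1)) with hwdef
  have hwne := hw.ne'
  field_simp
  ring
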